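/- arXiv:0911.1103 — 4 statements merged into one kernel-verified Lean document; each statement's English description precedes it below -/
import Mathlib

section
/- Let G be a finite group, N a normal subgroup, and suppose α is an automorphism of G that fixes N pointwise and induces the identity automorphism on G/N. Then α^|N| is the identity automorphism of G; in particular the order of α divides |N|. -/
/-!
Write `α g = n g` with `n = α g * g⁻¹ ∈ N`. Since `α` fixes `n`, applying `α` repeatedly gives
`α^k g = n^k g`, and `n^|N| = 1` by Lagrange.
-/

theorem MulAut.pow_apply_eq_pow_mul_of_map_eq {G : Type*} [Group G] (α : MulAut G) (g : G)
    (hg : α (α g * g⁻¹) = α g * g⁻¹) (k : ℕ) : (α ^ k) g = (α g * g⁻¹) ^ k * g := by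
  induction k with
  | zero => simp
  | succ k ih =>
    have hfix_pow : α ((α g * g⁻¹) ^ k) = (α g * g⁻¹) ^ k := by rw [map_pow, hg]
    calc (α ^ (k + 1)) g = α ((α ^ k) g) := by rw [pow_succ', MulAut.mul_apply]
      _ = (α g * g⁻¹) ^ k * α g := by rw [ih, map_mul, hfix_pow]
      _ = (α g * g⁻¹) ^ (k + 1) * g := by rw [pow_succ, mul_assoc, inv_mul_cancel_right]

theorem aut_pow_card_eq_one_of_fix_general (G : Type*) [Group G]
    (N : Subgroup G) (α : MulAut G)
    (hfix : ∀ s ∈ N, α s = s) (hquot : ∀ g : G, α g * g⁻¹ ∈ N) :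
    α ^ Nat.card N = 1 ∧ orderOf α ∣ Nat.card N := by
  have hpow : α ^ Nat.card N = 1 := by
    ext g
    have hcard : (α g * g⁻¹) ^ Nat.card N = 1 :=
      congrArg Subtype.val (pow_card_eq_one' (x := (⟨_, hquot g⟩ : N)))
    rw [α.pow_apply_eq_pow_mul_of_map_eq g (hfix _ (hquot g)), hcard, one_mul, MulAut.one_apply]
  exact ⟨hpow, orderOf_dvd_of_pow_eq_one hpow⟩

/-- If `α` is an automorphism of a finite group `G` fixing a normal subgroup `N` pointwise and
inducing the identity on `G/N`, then `α^|N| = 1`; in particular the order of `α` divides `|N|`. -/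
theorem aut_pow_card_eq_one_of_fix (G : Type*) [Group G] [Finite G]
    (N : Subgroup G) (hN : N.Normal) (α : MulAut G)
    (hfix : ∀ s ∈ N, α s = s) (hquot : ∀ g : G, α g * g⁻¹ ∈ N) :
    α ^ Nat.card N = 1 ∧ orderOf α ∣ Nat.card N :=
  aut_pow_card_eq_one_of_fix_general G N α hfix hquot
end

section
/- Let p be an odd prime, n ≥ 1 an integer, K a complete discretely valued field of mixed characteristic (0,p) with valuation v normalized so v(p) = 1, and η ∈ K with v(η) > 1/p. Then for every i with 2 ≤ i ≤ p^n, i ≠ p, the coefficient of T^i in (1 + ηT)^{p^n}, namely C(p^n, i)·η^i, has valuation strictly greater than n + 1/(p-1). -/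
/-!
Let `k = v_p(i)`. By Kummer, `v_p (C(p^n, i)) = n - k`, so the coefficient has additive valuation
greater than `n - k + i/p`, and it suffices that `k + 1/(p-1) ≤ i/p`. For `k = 0` this is `i ≥ 2`,
for `k = 1` it is `i ≥ 2p` (as `i ≠ p`), and for `k ≥ 2` it follows from `i ≥ p^k` by Bernoulli's
inequality, provided `p ≥ 3`.
-/

theorem Valuation.map_natCast_le_one {R Γ : Type*} [Ring R] [LinearOrderedCommMonoidWithZero Γ]
    (v : Valuation R Γ) (m : ℕ) : v (m : R) ≤ 1 := by
  induction m with
  | zero => simp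
  | succ m ih => exact (Nat.cast_succ (R := R) m) ▸ v.map_add_le ih v.map_one.le

theorem Valuation.map_natCast_le_of_dvd {R Γ : Type*} [Ring R] [LinearOrderedCommMonoidWithZero Γ]
    (v : Valuation R Γ) {a b : ℕ} (h : a ∣ b) : v (b : R) ≤ v (a : R) := by
  obtain ⟨c, rfl⟩ := h
  rw [Nat.cast_mul, map_mul]
  exact mul_le_of_le_one_right' (v.map_natCast_le_one c)

namespace Nat

theorem add_two_mul_sub_one_lt_pow_succ_mul_sub_one {p : ℕ} (hp : 3 ≤ p) (j : ℕ) :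
    (j + 2) * (p - 1) < p ^ (j + 1) * (p - 1) := by
  obtain ⟨q, rfl⟩ : ∃ q, p = q + 1 := ⟨p - 1, by omega⟩
  have bernoulli := one_add_le_pow_of_two_add_nonneg (a := q) (by omega) (j + 1)
  rw [Nat.add_sub_cancel, add_comm q 1]
  push_cast at bernoulli
  nlinarith [Nat.mul_le_mul_right q bernoulli,
    Nat.mul_le_mul_left ((j + 1) * q) (show 2 ≤ q by omega)]

theorem mul_mul_sub_one_add_one_le_of_pow_dvd {p k i : ℕ} (hp : 3 ≤ p) (hk : p ^ k ∣ i)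
    (hi : 2 ≤ i) (hip : i ≠ p) : p * (k * (p - 1) + 1) ≤ i * (p - 1) := by
  rcases k with _ | _ | j
  · calc p * (0 * (p - 1) + 1) ≤ 2 * (p - 1) := by omega
      _ ≤ i * (p - 1) := Nat.mul_le_mul_right _ hi
  · obtain ⟨m, rfl⟩ := hk
    have hm : 2 ≤ m := by
      rw [pow_one] at hip hi
      by_contra! hm
      interval_cases m <;> simp_all
    calc p * ((0 + 1) * (p - 1) + 1) ≤ p * (2 * (p - 1)) := by gcongr; omega
      _ ≤ p ^ 1 * m * (p - 1) := by rw [pow_one, mul_assoc]; gcongr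
  · calc p * ((j + 2) * (p - 1) + 1) ≤ p * (p ^ (j + 1) * (p - 1)) :=
          Nat.mul_le_mul_left p (add_two_mul_sub_one_lt_pow_succ_mul_sub_one hp j)
      _ = p ^ (j + 2) * (p - 1) := by ring
      _ ≤ i * (p - 1) := Nat.mul_le_mul_right _ (Nat.le_of_dvd (by omega) hk)

theorem cast_add_one_div_sub_one_le_div_of_pow_dvd {p k i : ℕ} (hp : 3 ≤ p) (hk : p ^ k ∣ i)
    (hi : 2 ≤ i) (hip : i ≠ p) : (k : ℝ) + 1 / ((p : ℝ) - 1) ≤ i / p := by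
  have hp' : (3 : ℝ) ≤ p := by exact_mod_cast hp
  have key : ((p * (k * (p - 1) + 1) : ℕ) : ℝ) ≤ ((i * (p - 1) : ℕ) : ℝ) :=
    Nat.cast_le.mpr (mul_mul_sub_one_add_one_le_of_pow_dvd hp hk hi hip)
  push_cast [Nat.cast_sub (by omega : 1 ≤ p)] at key
  rw [add_div' _ _ _ (by linarith), div_le_div_iff₀ (by linarith) (by linarith)]
  linarith

end Nat

theorem binomial_coeff_valuation_general (p : ℕ) (hp : p.Prime) (hodd : Odd p)
    (n : ℕ) (K : Type*) [Field K]
    (v : Valuation K NNReal) (hvp : v (p : K) = (p : NNReal)⁻¹)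
    (η : K) (hη : v η < (p : NNReal) ^ (-(1 / (p : ℝ)))) :
    ∀ i : ℕ, 2 ≤ i → i ≤ p ^ n → i ≠ p →
      v (((p ^ n).choose i : K) * η ^ i) <
        (p : NNReal) ^ (-((n : ℝ) + 1 / ((p : ℝ) - 1))) := by
  intro i hi hin hip
  have hp3 : 3 ≤ p := by have := hp.two_le; have := Nat.odd_iff.mp hodd; omega
  have hp0 : (p : NNReal) ≠ 0 := by exact_mod_cast hp.ne_zero
  set e := ((p ^ n).choose i).factorization p
  have hen : e + i.factorization p = n :=
    Nat.factorization_choose_prime_pow_add_factorization hp hin (by omega)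
  have hexp : (n : ℝ) + 1 / ((p : ℝ) - 1) ≤ e + i / p := by
    have := Nat.cast_add_one_div_sub_one_le_div_of_pow_dvd hp3 (Nat.ordProj_dvd i p) hi hip
    rw [← hen]; push_cast; linarith
  have hvC : v ((p ^ n).choose i : K) ≤ (p : NNReal)⁻¹ ^ e := by
    simpa [hvp] using v.map_natCast_le_of_dvd (Nat.ordProj_dvd ((p ^ n).choose i) p)
  have hvη : v η ^ i < ((p : NNReal) ^ (-(1 / (p : ℝ)))) ^ i :=
    pow_lt_pow_left₀ hη zero_le (by omega)
  calc v (((p ^ n).choose i : K) * η ^ i) = v ((p ^ n).choose i : K) * v η ^ i := by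
        rw [map_mul, map_pow]
    _ < (p : NNReal)⁻¹ ^ e * ((p : NNReal) ^ (-(1 / (p : ℝ)))) ^ i :=
        mul_lt_mul' hvC hvη zero_le (pow_pos (inv_pos.mpr (pos_iff_ne_zero.mpr hp0)) e)
    _ = (p : NNReal) ^ (-((e : ℝ) + i / p)) := by
        rw [← NNReal.rpow_natCast _ i, ← NNReal.rpow_mul, ← NNReal.rpow_natCast _ e,
          NNReal.inv_rpow, ← NNReal.rpow_neg, ← NNReal.rpow_add hp0]
        congr 1
        ring
    _ ≤ (p : NNReal) ^ (-((n : ℝ) + 1 / ((p : ℝ) - 1))) :=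
        NNReal.rpow_le_rpow_of_exponent_le (by exact_mod_cast hp.one_le) (neg_le_neg hexp)

/-- Let `p` be an odd prime, `n ≥ 1`, `K` a field of characteristic `0` with a rank-one
valuation `v` normalized by `v(p) = 1/p` (multiplicatively; i.e. additive valuation `1`), and
`η ∈ K` with additive valuation `> 1/p`.  Then for `2 ≤ i ≤ p^n`, `i ≠ p`, the coefficient
`C(p^n, i)·η^i` of `T^i` in `(1 + ηT)^{p^n}` has additive valuation `> n + 1/(p-1)`. -/
theorem binomial_coeff_valuation (p : ℕ) (hp : p.Prime) (hodd : Odd p)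
    (n : ℕ) (hn : 1 ≤ n) (K : Type*) [Field K] [CharZero K]
    (v : Valuation K NNReal) (hvp : v (p : K) = (p : NNReal)⁻¹)
    (η : K) (hη : v η < (p : NNReal) ^ (-(1 / (p : ℝ)))) :
    ∀ i : ℕ, 2 ≤ i → i ≤ p ^ n → i ≠ p →
      v (((p ^ n).choose i : K) * η ^ i) <
        (p : NNReal) ^ (-((n : ℝ) + 1 / ((p : ℝ) - 1))) :=
  binomial_coeff_valuation_general p hp hodd n K v hvp η hη
end

section
/- Let R be a complete discrete valuation ring of mixed characteristic (0,p) with valuation v normalized so that v(p) = 1, and suppose g = 1 + bw with b ∈ R, v(b) = n + 1/(p-1) for some integer n > 1, and w ∈ R{T} (a convergent power series). Then the binomial series for the p^{n-1}-st root of g, namely 1 + (1/p^{n-1})bw + ((1/p^{n-1})((1/p^{n-1})-1)/2!)(bw)² + ⋯, converges in R{T}, and equals 1 + a·u where a = b/p^{n-1}, v(a) = p/(p-1), and u ≡ w modulo the maximal ideal of R. -/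
/-!
Put `m = p^(n-1)`, `a = b / m` and `|p| = v p`. The binomial series `B = Σ c_j b^j X^j` of
`(1 + bX)^(1/m)` satisfies `B^m = 1 + bX`. From `v(c_j) = |p|^(-(n-1)j - v_p(j!))` and Legendre's
bound `(p-1) v_p(j!) < j` one gets `v(c_j b^j) ≤ |p|^(j-1) v(a)` for `j ≥ 1`, so `B = 1 + a E` with
`E = X + ⋯` whose `k`-th coefficient has valuation at most `|p|^(k-1)`. Hence the truncations of `E`
evaluated at `w` converge coefficientwise, at rate `|p|^N`, to some `u ≡ w` in `R{T}`. Finally the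
truncation `B_{≤N}` satisfies `B_{≤N}^m ≡ 1 + bX` modulo `X^(N+1)`, with `k`-th coefficients bounded
by `|p|^k`; substituting `w`, `(1 + a u)^m` and `1 + bw` agree up to `|p|^N` for every `N`.
-/

open PowerSeries

/-- The coefficient `C(1/p^(n-1), j)` of the binomial series for the `p^(n-1)`-st root. -/
noncomputable def binomialRootCoeff (p n j : ℕ) : ℚ :=
  (∏ t ∈ Finset.range j, ((1 / (p : ℚ) ^ (n - 1)) - (t : ℚ))) / (Nat.factorial j : ℚ)

open Finset
open scoped Nat NNReal

section CoeffBounds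
variable {R : Type*} [CommRing R] {Γ₀ : Type*} [LinearOrderedCommGroupWithZero Γ₀]
  (v : Valuation R Γ₀)

theorem valuation_coeff_one_le (i : ℕ) : v (coeff i (1 : R⟦X⟧)) ≤ 1 := by
  rw [coeff_one]
  split_ifs <;> simp

theorem valuation_coeff_mul_le {f g : R⟦X⟧} {c d γ : Γ₀}
    (hf : ∀ k, v (coeff k f) ≤ c * γ ^ k) (hg : ∀ k, v (coeff k g) ≤ d * γ ^ k) (k : ℕ) :
    v (coeff k (f * g)) ≤ c * d * γ ^ k := by
  rw [coeff_mul]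
  refine v.map_sum_le fun x hx => ?_
  rw [HasAntidiagonal.mem_antidiagonal] at hx
  calc v (coeff x.1 f * coeff x.2 g) ≤ c * γ ^ x.1 * (d * γ ^ x.2) :=
        (v.map_mul _ _).trans_le (mul_le_mul' (hf _) (hg _))
    _ = c * d * γ ^ k := by rw [← hx, pow_add, mul_mul_mul_comm]

theorem valuation_coeff_pow_le {f : R⟦X⟧} {c γ : Γ₀} (hf : ∀ k, v (coeff k f) ≤ c * γ ^ k)
    (m k : ℕ) : v (coeff k (f ^ m)) ≤ c ^ m * γ ^ k := by
  induction m generalizing k with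
  | zero =>
    rw [pow_zero, pow_zero, one_mul, coeff_one]
    split_ifs with h
    · simp [h]
    · simp
  | succ m ih => rw [pow_succ, pow_succ]; exact valuation_coeff_mul_le v ih hf k

theorem valuation_coeff_mul_le_of_le_one {f g : R⟦X⟧} {c : Γ₀} (hf : ∀ i, v (coeff i f) ≤ 1)
    (hg : ∀ i, v (coeff i g) ≤ c) (i : ℕ) : v (coeff i (f * g)) ≤ c := by
  simpa using valuation_coeff_mul_le v (c := 1) (d := c) (γ := 1) (by simpa using hf)
    (by simpa using hg) i

theorem valuation_coeff_pow_le_one {f : R⟦X⟧} (hf : ∀ i, v (coeff i f) ≤ 1) (m i : ℕ) :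
    v (coeff i (f ^ m)) ≤ 1 := by
  simpa using valuation_coeff_pow_le v (c := 1) (γ := 1) (by simpa using hf) m i

theorem valuation_coeff_pow_sub_pow_le {f g : R⟦X⟧} {c : Γ₀} (hf : ∀ i, v (coeff i f) ≤ 1)
    (hg : ∀ i, v (coeff i g) ≤ 1) (hfg : ∀ i, v (coeff i (f - g)) ≤ c) (m i : ℕ) :
    v (coeff i (f ^ m - g ^ m)) ≤ c := by
  rw [← geom_sum₂_mul]
  refine valuation_coeff_mul_le_of_le_one v (fun i => ?_) hfg i
  rw [map_sum]
  exact v.map_sum_le fun t _ => valuation_coeff_mul_le_of_le_one v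
    (valuation_coeff_pow_le_one v hf t) (valuation_coeff_pow_le_one v hg _) i

theorem valuation_coeff_aeval_le {P : Polynomial R} {c : Γ₀} (hP : ∀ k, v (P.coeff k) ≤ c)
    {w : R⟦X⟧} (hw : ∀ i, v (coeff i w) ≤ 1) (i : ℕ) : v (coeff i (Polynomial.aeval w P)) ≤ c := by
  rw [Polynomial.aeval_eq_sum_range, map_sum]
  refine v.map_sum_le fun k _ => ?_
  rw [coeff_smul, smul_eq_mul, map_mul]
  exact mul_le_of_le_of_le_one (hP k) (valuation_coeff_pow_le_one v hw k i)

theorem valuation_coeff_trunc_pow_sub_le {f : R⟦X⟧} {g : Polynomial R} {m : ℕ}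
    (hfg : f ^ m = g) {γ : Γ₀} (hγ : γ ≤ 1) (hf : ∀ k, v (coeff k f) ≤ γ ^ k)
    (hg : ∀ k, v (g.coeff k) ≤ γ ^ k) (N k : ℕ) : v ((trunc N f ^ m - g).coeff k) ≤ γ ^ N := by
  have hdvd : X ^ N ∣ ((trunc N f ^ m - g : Polynomial R) : R⟦X⟧) := by
    push_cast
    rw [← hfg]
    refine dvd_trans (X_pow_dvd_iff.mpr fun i hi => ?_) (sub_dvd_pow_sub_pow _ _ m)
    rw [map_sub, coeff_coe_trunc_of_lt hi, sub_self]
  rcases lt_or_ge k N with hk | hk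
  · rw [← Polynomial.coeff_coe, X_pow_dvd_iff.mp hdvd k hk, map_zero]
    exact zero_le
  refine le_trans ?_ (pow_le_pow_right_of_le_one' hγ hk)
  rw [Polynomial.coeff_sub, ← Polynomial.coeff_coe, Polynomial.coe_pow]
  have htrunc : ∀ i, v (coeff i (trunc N f : R⟦X⟧)) ≤ 1 * γ ^ i := fun i => by
    rw [Polynomial.coeff_coe, coeff_trunc, one_mul]
    split_ifs
    · exact hf i
    · simp
  refine (v.map_sub _ _).trans (max_le ?_ (hg k))
  simpa using valuation_coeff_pow_le v htrunc m k

theorem valuation_coeff_one_add_C_mul_le_one {a : R} (ha : v a ≤ 1) {f : R⟦X⟧}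
    (hf : ∀ i, v (coeff i f) ≤ 1) (i : ℕ) : v (coeff i (1 + C a * f)) ≤ 1 := by
  rw [map_add, coeff_C_mul]
  exact (v.map_add _ _).trans (max_le (valuation_coeff_one_le v i)
    ((v.map_mul _ _).trans_le (mul_le_one' ha (hf i))))

theorem valuation_coeff_one_add_C_mul_sub_le {a : R} (ha : v a ≤ 1) {f g : R⟦X⟧} {c : Γ₀}
    (hfg : ∀ i, v (coeff i (f - g)) ≤ c) (i : ℕ) :
    v (coeff i ((1 + C a * f) - (1 + C a * g))) ≤ c := by
  rw [add_sub_add_left_eq_sub, ← mul_sub, coeff_C_mul, map_mul]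
  exact mul_le_of_le_one_of_le ha (hfg i)

theorem valuation_coeff_one_add_C_mul_le_pow {a : R} {γ : Γ₀} (ha : v a ≤ γ) {E : R⟦X⟧}
    (hE0 : coeff 0 E = 0) (hE : ∀ k, v (coeff (k + 1) E) ≤ γ ^ k) (k : ℕ) :
    v (coeff k (1 + C a * E)) ≤ γ ^ k := by
  rcases k with _ | k
  · rw [map_add, coeff_C_mul, hE0, mul_zero, add_zero, pow_zero]
    exact valuation_coeff_one_le v 0
  · rw [map_add, coeff_C_mul, coeff_one, if_neg k.succ_ne_zero, zero_add, map_mul, pow_succ']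
    exact mul_le_mul' ha (hE k)

theorem valuation_coeff_trunc_le_one {γ : Γ₀} (hγ : γ ≤ 1) {E : R⟦X⟧} (hE0 : coeff 0 E = 0)
    (hE : ∀ k, v (coeff (k + 1) E) ≤ γ ^ k) (N k : ℕ) : v ((trunc N E).coeff k) ≤ 1 := by
  rw [coeff_trunc]
  split_ifs
  · rcases k with _ | k
    · simp [hE0]
    · exact (hE k).trans (pow_le_one' hγ k)
  · simp

theorem valuation_coeff_trunc_sub_trunc_le {γ : Γ₀} (hγ : γ ≤ 1) {E : R⟦X⟧}
    (hE : ∀ k, v (coeff (k + 1) E) ≤ γ ^ k) {N N' : ℕ} (hN : N ≤ N') (k : ℕ) :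
    v ((trunc (N' + 1) E - trunc (N + 1) E).coeff k) ≤ γ ^ N := by
  rw [Polynomial.coeff_sub, coeff_trunc, coeff_trunc]
  split_ifs with h' h
  · simp
  · obtain ⟨j, rfl⟩ : ∃ j, k = j + 1 := ⟨k - 1, by omega⟩
    rw [sub_zero]
    exact (hE j).trans (pow_le_pow_right_of_le_one' hγ (by omega))
  · omega
  · simp

theorem aeval_trunc_one_add_C_mul (a : R) (E w : R⟦X⟧) (N : ℕ) :
    Polynomial.aeval w (trunc (N + 1) (1 + C a * E)) =
      1 + C a * Polynomial.aeval w (trunc (N + 1) E) := by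
  rw [map_add, trunc_one, trunc_C_mul, map_add, map_one, map_mul, Polynomial.aeval_C]
  rfl

theorem valuation_coeff_one_add_C_mul_X_le {b : R} {γ : Γ₀} (hb : v b ≤ γ) (k : ℕ) :
    v ((1 + Polynomial.C b * Polynomial.X).coeff k) ≤ γ ^ k := by
  rcases k with _ | _ | k <;> simp [Polynomial.coeff_one, Polynomial.coeff_X, hb]

end CoeffBounds

section TendstoZero
variable {R : Type*} [CommRing R] {Γ₀ : Type*} [LinearOrderedCommGroupWithZero Γ₀]

/-- Together with integrality of the coefficients, this is membership in the Tate algebra `R{T}`. -/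
def CoeffTendstoZero (v : Valuation R Γ₀) (f : R⟦X⟧) : Prop :=
  ∀ ε : Γ₀, 0 < ε → ∃ M : ℕ, ∀ i ≥ M, v (coeff i f) < ε

variable {v : Valuation R Γ₀}

namespace CoeffTendstoZero

theorem one : CoeffTendstoZero v 1 := fun ε hε =>
  ⟨1, fun i hi => by rwa [coeff_one, if_neg (by omega), map_zero]⟩

theorem mul {f g : R⟦X⟧} (hf : CoeffTendstoZero v f) (hg : CoeffTendstoZero v g)
    (hf1 : ∀ i, v (coeff i f) ≤ 1) (hg1 : ∀ i, v (coeff i g) ≤ 1) :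
    CoeffTendstoZero v (f * g) := by
  intro ε hε
  obtain ⟨Mf, hMf⟩ := hf ε hε
  obtain ⟨Mg, hMg⟩ := hg ε hε
  refine ⟨Mf + Mg, fun i hi => ?_⟩
  rw [coeff_mul]
  refine v.map_sum_lt hε.ne' fun x hx => ?_
  rw [HasAntidiagonal.mem_antidiagonal] at hx
  rw [map_mul]
  rcases le_or_gt Mf x.1 with h | h
  · exact mul_lt_of_lt_of_le_one (hMf _ h) (hg1 _)
  · exact mul_lt_of_le_one_of_lt (hf1 _) (hMg _ (by omega))

theorem pow {f : R⟦X⟧} (hf : CoeffTendstoZero v f) (hf1 : ∀ i, v (coeff i f) ≤ 1) (m : ℕ) :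
    CoeffTendstoZero v (f ^ m) := by
  induction m with
  | zero => simpa using one
  | succ m ih => rw [pow_succ]; exact ih.mul hf (valuation_coeff_pow_le_one v hf1 m) hf1

theorem aeval {w : R⟦X⟧} (hw : CoeffTendstoZero v w) (hw1 : ∀ i, v (coeff i w) ≤ 1)
    {P : Polynomial R} (hP : ∀ k, v (P.coeff k) ≤ 1) :
    CoeffTendstoZero v (Polynomial.aeval w P) := by
  intro ε hε
  choose M hM using fun k => hw.pow hw1 k ε hε
  refine ⟨(range (P.natDegree + 1)).sup M, fun i hi => ?_⟩
  rw [Polynomial.aeval_eq_sum_range, map_sum]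
  refine v.map_sum_lt hε.ne' fun k hk => ?_
  rw [coeff_smul, smul_eq_mul, map_mul]
  exact mul_lt_of_le_one_of_lt (hP k) (hM k i ((le_sup hk).trans hi))

theorem of_forall_approx {f : R⟦X⟧}
    (h : ∀ ε : Γ₀, 0 < ε → ∃ g, CoeffTendstoZero v g ∧ ∀ i, v (coeff i (f - g)) < ε) :
    CoeffTendstoZero v f := by
  intro ε hε
  obtain ⟨g, hg, hfg⟩ := h ε hε
  obtain ⟨M, hM⟩ := hg ε hε
  refine ⟨M, fun i hi => ?_⟩
  rw [← sub_add_cancel f g, map_add]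
  exact (v.map_add _ _).trans_lt (max_lt (hfg i) (hM i hi))

end CoeffTendstoZero
end TendstoZero

section RealValued
variable {K : Type*} [Field K] (v : Valuation K ℝ≥0)

def IsCauchyComplete : Prop :=
  ∀ a : ℕ → K, (∀ ε : ℝ≥0, 0 < ε → ∃ M : ℕ, ∀ i ≥ M, ∀ j ≥ M, v (a i - a j) < ε) →
    ∃ x : K, ∀ ε : ℝ≥0, 0 < ε → ∃ M : ℕ, ∀ i ≥ M, v (a i - x) < ε

variable {v}

theorem IsCauchyComplete.exists_le_pow (hv : IsCauchyComplete v) {γ : ℝ≥0} (hγ : γ < 1)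
    {x : ℕ → K} (hx : ∀ N N', N ≤ N' → v (x N' - x N) ≤ γ ^ N) :
    ∃ y, ∀ N, v (y - x N) ≤ γ ^ N := by
  have hx' : ∀ N i j, N ≤ i → N ≤ j → v (x i - x j) ≤ γ ^ N := fun N i j hi hj => by
    rcases le_total i j with h | h
    · rw [v.map_sub_swap]
      exact (hx i j h).trans (pow_le_pow_of_le_one zero_le hγ.le hi)
    · exact (hx j i h).trans (pow_le_pow_of_le_one zero_le hγ.le hj)
  obtain ⟨y, hy⟩ := hv x fun ε hε => by
    obtain ⟨M, hM⟩ := exists_pow_lt_of_lt_one hε hγ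
    exact ⟨M, fun i hi j hj => (hx' M i j hi hj).trans_lt hM⟩
  refine ⟨y, fun N => not_lt.mp fun hlt => ?_⟩
  obtain ⟨M, hM⟩ := hy _ (zero_le.trans_lt hlt)
  have hsplit := v.map_add (y - x (max N M)) (x (max N M) - x N)
  rw [sub_add_sub_cancel, v.map_sub_swap y (x (max N M))] at hsplit
  exact (hsplit.trans_lt (max_lt (hM _ (le_max_right N M))
    ((hx N _ (le_max_left N M)).trans_lt hlt))).false

theorem eq_of_forall_valuation_coeff_sub_le_pow {γ : ℝ≥0} (hγ : γ < 1) {f g : K⟦X⟧}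
    (h : ∀ N i, v (coeff i (f - g)) ≤ γ ^ N) : f = g := by
  refine sub_eq_zero.mp (ext fun i => ?_)
  by_contra hne
  obtain ⟨N, hN⟩ := exists_pow_lt_of_lt_one (zero_lt_iff.mpr (v.ne_zero_iff.mpr hne)) hγ
  exact (h N i).not_gt hN

end RealValued

section TruncEval
variable {K : Type*} [Field K]

def IsTruncEvalLimit (v : Valuation K ℝ≥0) (γ : ℝ≥0) (E w u : K⟦X⟧) : Prop :=
  ∀ N i, v (coeff i (u - Polynomial.aeval w (trunc (N + 1) E))) ≤ γ ^ N

variable {v : Valuation K ℝ≥0} {γ : ℝ≥0} {E w u : K⟦X⟧}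

theorem IsCauchyComplete.exists_isTruncEvalLimit (hv : IsCauchyComplete v) (hγ : γ < 1)
    (hE : ∀ k, v (coeff (k + 1) E) ≤ γ ^ k) (hw : ∀ i, v (coeff i w) ≤ 1) :
    ∃ u, IsTruncEvalLimit v γ E w u := by
  choose y hy using fun i => hv.exists_le_pow hγ
    (x := fun N => coeff i (Polynomial.aeval w (trunc (N + 1) E))) fun N N' hN => by
      rw [← map_sub, ← map_sub]
      exact valuation_coeff_aeval_le v (valuation_coeff_trunc_sub_trunc_le v hγ.le hE hN) hw i
  exact ⟨mk y, fun N i => by rw [map_sub, coeff_mk]; exact hy i N⟩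

namespace IsTruncEvalLimit

variable (hu : IsTruncEvalLimit v γ E w u) (hE0 : coeff 0 E = 0)
include hu hE0

theorem valuation_coeff_le_one (i : ℕ) : v (coeff i u) ≤ 1 := by
  simpa [trunc_one_left, hE0] using hu 0 i

theorem valuation_coeff_sub_le (hE1 : coeff 1 E = 1) (i : ℕ) : v (coeff i (u - w)) ≤ γ := by
  have htrunc : trunc 2 E = Polynomial.X := by
    ext k
    rw [coeff_trunc, Polynomial.coeff_X]
    rcases k with _ | _ | k <;> simp [hE0, hE1]
  simpa [htrunc] using hu 1 i

theorem coeffTendstoZero (hγ : γ < 1) (hE : ∀ k, v (coeff (k + 1) E) ≤ γ ^ k)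
    (hw : CoeffTendstoZero v w) (hw1 : ∀ i, v (coeff i w) ≤ 1) : CoeffTendstoZero v u :=
  CoeffTendstoZero.of_forall_approx fun ε hε => by
    obtain ⟨N, hN⟩ := exists_pow_lt_of_lt_one hε hγ
    exact ⟨_, hw.aeval hw1 (valuation_coeff_trunc_le_one v hγ.le hE0 hE (N + 1)),
      fun i => (hu N i).trans_lt hN⟩

theorem one_add_C_mul_pow (hγ : γ < 1) (hE : ∀ k, v (coeff (k + 1) E) ≤ γ ^ k) {a : K}
    (ha : v a ≤ γ) {m : ℕ} {g : Polynomial K} (hg : ∀ k, v (g.coeff k) ≤ γ ^ k)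
    (hEg : (1 + C a * E) ^ m = g) (hw : ∀ i, v (coeff i w) ≤ 1) :
    (1 + C a * u) ^ m = Polynomial.aeval w g := by
  have ha1 := ha.trans hγ.le
  refine eq_of_forall_valuation_coeff_sub_le_pow (v := v) hγ fun N i => ?_
  set S := Polynomial.aeval w (trunc (N + 1) (1 + C a * E))
  have hS : S = 1 + C a * Polynomial.aeval w (trunc (N + 1) E) := aeval_trunc_one_add_C_mul a E w N
  have hS1 : ∀ i, v (coeff i S) ≤ 1 := hS ▸ valuation_coeff_one_add_C_mul_le_one v ha1
    (valuation_coeff_aeval_le v (valuation_coeff_trunc_le_one v hγ.le hE0 hE _) hw)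
  have hF1 := valuation_coeff_one_add_C_mul_le_one v ha1 (hu.valuation_coeff_le_one hE0)
  have hFS : ∀ i, v (coeff i ((1 + C a * u) - S)) ≤ γ ^ N :=
    hS ▸ valuation_coeff_one_add_C_mul_sub_le v ha1 (hu N)
  have hSg : v (coeff i (S ^ m - Polynomial.aeval w g)) ≤ γ ^ N := by
    rw [← map_pow, ← map_sub]
    refine valuation_coeff_aeval_le v (fun k => ?_) hw i
    exact (valuation_coeff_trunc_pow_sub_le v hEg hγ.le
      (valuation_coeff_one_add_C_mul_le_pow v ha hE0 hE) hg (N + 1) k).trans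
      (pow_le_pow_of_le_one zero_le hγ.le N.le_succ)
  rw [← sub_add_sub_cancel _ (S ^ m), map_add]
  exact (v.map_add _ _).trans (max_le (valuation_coeff_pow_sub_pow_le v hF1 hS1 hFS m i) hSg)

omit hE0 in
theorem tendsto_aeval_trunc (hγ : γ < 1) {a : K} (ha : v a ≤ 1) :
    ∀ ε : ℝ≥0, 0 < ε → ∃ M : ℕ, ∀ N ≥ M, ∀ i,
      v (coeff i (Polynomial.aeval w (trunc N (1 + C a * E)) - (1 + C a * u))) < ε := by
  intro ε hε
  obtain ⟨N₀, hN₀⟩ := exists_pow_lt_of_lt_one hε hγ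
  refine ⟨N₀ + 1, fun N hN i => ?_⟩
  obtain ⟨N, rfl⟩ : ∃ k, N = k + 1 := ⟨N - 1, by omega⟩
  rw [aeval_trunc_one_add_C_mul]
  refine (valuation_coeff_one_add_C_mul_sub_le v ha (fun i => ?_) i).trans_lt hN₀
  rw [← neg_sub, map_neg, v.map_neg]
  exact (hu N i).trans (pow_le_pow_of_le_one zero_le hγ.le (by omega))

end IsTruncEvalLimit
end TruncEval

theorem Ring.choose_eq_prod_div {K : Type*} [Field K] [CharZero K] (x : K) (j : ℕ) :
    Ring.choose x j = (∏ t ∈ range j, (x - t)) / j ! := by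
  rw [Ring.choose_eq_smul, ← Polynomial.aeval_eq_smeval, Polynomial.aeval_def,
    ← Polynomial.eval_map, descPochhammer_map, descPochhammer_eval_eq_prod_range, smul_eq_mul,
    inv_mul_eq_div]

theorem PowerSeries.binomialSeries_nsmul {R A : Type*} [CommRing R] [BinomialRing R] [Ring A]
    [Algebra R A] (r : R) (m : ℕ) : binomialSeries A (m • r) = binomialSeries A r ^ m := by
  induction m with
  | zero => simp
  | succ m ih => rw [succ_nsmul, binomialSeries_add, ih, pow_succ]

theorem binomialRootCoeff_cast {K : Type*} [Field K] [CharZero K] (p n j : ℕ) :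
    (binomialRootCoeff p n j : K) = Ring.choose (1 / (p : K) ^ (n - 1)) j := by
  rw [Ring.choose_eq_prod_div, binomialRootCoeff]
  push_cast
  rfl

namespace Valuation
variable {K : Type*} [Field K] {Γ₀ : Type*} [LinearOrderedCommGroupWithZero Γ₀]
  (v : Valuation K Γ₀)

theorem map_natCast_le_one_s13 (m : ℕ) : v m ≤ 1 := by
  induction m with
  | zero => simp
  | succ k ih =>
    rw [Nat.cast_succ]
    exact (v.map_add _ _).trans (max_le ih v.map_one.le)

theorem map_intCast_le_one (m : ℤ) : v m ≤ 1 := by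
  obtain ⟨m, rfl | rfl⟩ := Int.eq_nat_or_neg m <;> simp [map_natCast_le_one_s13]

theorem map_natCast_eq_one_of_not_dvd {p : ℕ} (hp : p.Prime) (hvp : v p < 1) {m : ℕ}
    (hm : ¬ p ∣ m) : v m = 1 := by
  obtain ⟨x, y, hxy⟩ : IsCoprime (m : ℤ) p :=
    Nat.isCoprime_iff_coprime.mpr ((hp.coprime_iff_not_dvd.mpr hm).symm)
  refine (v.map_natCast_le_one_s13 m).antisymm (not_lt.mp fun hlt => ?_)
  have h1 : (1 : K) = x * m + y * p := by exact_mod_cast congrArg (Int.cast (R := K)) hxy.symm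
  have : v (1 : K) < 1 := by
    rw [h1]
    refine (v.map_add _ _).trans_lt (max_lt ?_ ?_) <;> rw [map_mul]
    · exact Right.mul_lt_one_of_le_of_lt (by exact_mod_cast v.map_intCast_le_one x) hlt
    · exact Right.mul_lt_one_of_le_of_lt (by exact_mod_cast v.map_intCast_le_one y) hvp
  simp at this

theorem map_natCast_eq_pow_padicValNat {p : ℕ} (hp : p.Prime) (hvp : v p < 1) {m : ℕ}
    (hm : m ≠ 0) : v m = v p ^ padicValNat p m := by
  conv_lhs => rw [← Nat.ordProj_mul_ordCompl_eq_self m p]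
  rw [Nat.cast_mul, map_mul, Nat.cast_pow, map_pow,
    v.map_natCast_eq_one_of_not_dvd hp hvp (Nat.not_dvd_ordCompl hp hm), mul_one,
    Nat.factorization_def m hp]

theorem map_sub_natCast_of_one_lt {x : K} (hx : 1 < v x) (t : ℕ) : v (x - t) = v x :=
  v.map_sub_eq_of_lt_left ((v.map_natCast_le_one_s13 t).trans_lt hx)

theorem map_choose_mul_pow_padicValNat [CharZero K] {p : ℕ} (hp : p.Prime) (hvp : v p < 1)
    {x : K} (hx : 1 < v x) (j : ℕ) :
    v (Ring.choose x j) * v p ^ padicValNat p j ! = v x ^ j := by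
  rw [Ring.choose_eq_prod_div, ← v.map_natCast_eq_pow_padicValNat hp hvp (Nat.factorial_ne_zero j),
    map_div₀, div_mul_cancel₀ _ (by simp [Nat.factorial_ne_zero]), map_prod,
    prod_congr rfl fun t _ => v.map_sub_natCast_of_one_lt hx t, prod_const, card_range]

theorem map_div_pow_sub_one {π b : K} (hπ : v π ≠ 0) {n : ℕ} (hn : 1 ≤ n) {δ : Γ₀}
    (hb : v b = v π ^ n * δ) : v (b / π ^ (n - 1)) = v π * δ := by
  obtain ⟨k, rfl⟩ : ∃ k, n = k + 1 := ⟨n - 1, by omega⟩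
  rw [Nat.add_sub_cancel, map_div₀, map_pow, hb, pow_succ, mul_assoc,
    mul_div_cancel_left₀ _ (pow_ne_zero _ hπ)]

end Valuation

section BinomialRootSeries
variable {K : Type*} [Field K] [CharZero K]

noncomputable def binomialRootSeries (p n : ℕ) (b : K) : K⟦X⟧ :=
  rescale b (binomialSeries K (1 / (p : K) ^ (n - 1)))

theorem coeff_binomialRootSeries (p n : ℕ) (b : K) (j : ℕ) :
    coeff j (binomialRootSeries p n b) = binomialRootCoeff p n j * b ^ j := by
  rw [binomialRootSeries, coeff_rescale, binomialSeries_coeff, binomialRootCoeff_cast, smul_eq_mul,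
    mul_one, mul_comm]

theorem binomialRootSeries_pow {p : ℕ} (hp : p ≠ 0) (n : ℕ) (b : K) :
    binomialRootSeries p n b ^ p ^ (n - 1) =
      ((1 + Polynomial.C b * Polynomial.X : Polynomial K) : K⟦X⟧) := by
  rw [binomialRootSeries, ← map_pow, ← binomialSeries_nsmul, nsmul_eq_mul, Nat.cast_pow,
    mul_one_div_cancel (pow_ne_zero _ (Nat.cast_ne_zero.mpr hp)), ← Nat.cast_one,
    binomialSeries_nat]
  simp [rescale_X]

theorem sum_binomialRootCoeff_eq_aeval_trunc (p n : ℕ) (b : K) (w : K⟦X⟧) (N : ℕ) :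
    ∑ j ∈ range N, C (binomialRootCoeff p n j : K) * (C b * w) ^ j =
      Polynomial.aeval w (trunc N (binomialRootSeries p n b)) := by
  rw [Polynomial.aeval_def, eval₂_trunc_eq_sum_range]
  refine sum_congr rfl fun j _ => ?_
  rw [coeff_binomialRootSeries, mul_pow, ← mul_assoc, ← map_pow, ← map_mul]
  rfl

variable {Γ₀ : Type*} [LinearOrderedCommGroupWithZero Γ₀] (v : Valuation K Γ₀)

theorem valuation_binomialRootCoeff_mul_pow_le {p : ℕ} (hp : p.Prime) (hvp : v p < 1) {n : ℕ}
    (hn : 1 < n) {δ : Γ₀} (hδ : δ ^ (p - 1) = v p) {b : K} (hb : v b = v p ^ n * δ) {j : ℕ}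
    (hj : j ≠ 0) :
    v (binomialRootCoeff p n j * b ^ j) ≤ v p ^ (j - 1) * v (b / p ^ (n - 1)) := by
  have : Fact p.Prime := ⟨hp⟩
  obtain ⟨k, rfl⟩ : ∃ k, n = k + 1 := ⟨n - 1, by omega⟩
  rw [Nat.add_sub_cancel]
  set γ := v p
  set e := padicValNat p j !
  have hγ0 : γ ≠ 0 := v.ne_zero_iff.mpr (Nat.cast_ne_zero.mpr hp.ne_zero)
  have hx : v (1 / (p : K) ^ k) * γ ^ k = 1 := by
    rw [← map_pow, ← map_mul, one_div_mul_cancel (pow_ne_zero _ (by exact_mod_cast hp.ne_zero)),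
      map_one]
  have hx1 : 1 < v (1 / (p : K) ^ k) := by
    refine lt_of_not_ge fun h => ?_
    have := Right.mul_lt_one_of_le_of_lt h (pow_lt_one' hvp (by omega : k ≠ 0))
    exact this.ne hx
  have hδ1 : δ ≤ 1 := (pow_le_one_iff (by have := hp.two_le; omega)).mp (hδ ▸ hvp.le)
  have hLeg : (p - 1) * e + 1 ≤ j := sub_one_mul_padicValNat_factorial_lt_of_ne_zero p hj
  have ha : v (b / p ^ k) = γ * δ := by
    simpa using v.map_div_pow_sub_one hγ0 k.succ_pos hb
  -- multiply through by `γ ^ e = v (j !)` to clear the denominator of `binomialRootCoeff`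
  refine (mul_le_mul_iff_left₀ (zero_lt_iff.mpr (pow_ne_zero e hγ0))).mp ?_
  calc v (binomialRootCoeff p (k + 1) j * b ^ j) * γ ^ e
      = (v (1 / (p : K) ^ k) * γ ^ k) ^ j * γ ^ j * δ ^ j := by
        rw [map_mul, mul_right_comm, binomialRootCoeff_cast, Nat.add_sub_cancel,
          v.map_choose_mul_pow_padicValNat hp hvp hx1, map_pow, hb, pow_succ]
        simp only [mul_pow, mul_comm, mul_left_comm]
    _ ≤ γ ^ j * δ ^ ((p - 1) * e + 1) := by
        rw [hx, one_pow, one_mul]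
        exact mul_le_mul_right (pow_le_pow_right_of_le_one' hδ1 hLeg) _
    _ = γ ^ (j - 1) * v (b / p ^ k) * γ ^ e := by
        rw [ha, pow_add, pow_mul, hδ, pow_one, ← mul_assoc (γ ^ (j - 1)), pow_sub_one_mul hj]
        simp only [mul_comm, mul_assoc, mul_left_comm]

theorem exists_binomialRootSeries_eq_one_add_C_mul {p : ℕ} (hp : p.Prime)
    (hvp : v p < 1) {n : ℕ} (hn : 1 < n) {δ : Γ₀} (hδ : δ ^ (p - 1) = v p) {b : K}
    (hb : v b = v p ^ n * δ) :
    ∃ E : K⟦X⟧, binomialRootSeries p n b = 1 + C (b / p ^ (n - 1)) * E ∧ coeff 0 E = 0 ∧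
      coeff 1 E = 1 ∧ ∀ k, v (coeff (k + 1) E) ≤ v p ^ k := by
  set a : K := b / p ^ (n - 1)
  have hpK : (p : K) ≠ 0 := Nat.cast_ne_zero.mpr hp.ne_zero
  have hp0 : v p ≠ 0 := v.ne_zero_iff.mpr hpK
  have hδ0 : δ ≠ 0 := by
    rintro rfl
    exact hp0 (hδ ▸ zero_pow (by have := hp.two_le; omega))
  have hb0 : b ≠ 0 := v.ne_zero_iff.mp (hb ▸ mul_ne_zero (pow_ne_zero _ hp0) hδ0)
  have ha0 : a ≠ 0 := div_ne_zero hb0 (pow_ne_zero _ hpK)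
  refine ⟨C a⁻¹ * (binomialRootSeries p n b - 1), ?_, ?_, ?_, fun k => ?_⟩
  · rw [← mul_assoc, ← map_mul, mul_inv_cancel₀ ha0, map_one, one_mul, add_sub_cancel]
  · rw [coeff_C_mul, map_sub, coeff_binomialRootSeries, coeff_one, if_pos rfl]
    simp [binomialRootCoeff]
  · rw [coeff_C_mul, map_sub, coeff_binomialRootSeries, coeff_one, if_neg one_ne_zero, sub_zero]
    simp [binomialRootCoeff, a]
    field_simp
  · rw [coeff_C_mul, map_sub, coeff_binomialRootSeries, coeff_one, if_neg k.succ_ne_zero,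
      sub_zero, map_mul, map_inv₀]
    refine (inv_mul_le_iff₀ (zero_lt_iff.mpr (v.ne_zero_iff.mpr ha0))).mpr ?_
    rw [mul_comm (v a)]
    exact valuation_binomialRootCoeff_mul_pow_le v hp hvp hn hδ hb k.succ_ne_zero

end BinomialRootSeries

theorem exists_pow_sub_one_eq_inv_natCast {p : ℕ} (hp : 1 < p) (n : ℕ) :
    ∃ δ : ℝ≥0, δ ^ (p - 1) = (p : ℝ≥0)⁻¹ ∧
      (p : ℝ≥0) ^ (-((n : ℝ) + 1 / ((p : ℝ) - 1))) = (p : ℝ≥0)⁻¹ ^ n * δ ∧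
      (p : ℝ≥0)⁻¹ * δ = (p : ℝ≥0) ^ (-((p : ℝ) / ((p : ℝ) - 1))) := by
  have hq : (p : ℝ≥0) ≠ 0 := by positivity
  have hp1 : (p : ℝ) - 1 ≠ 0 := sub_ne_zero.mpr (by exact_mod_cast hp.ne')
  have hinv : ∀ k : ℕ, (p : ℝ≥0)⁻¹ ^ k = (p : ℝ≥0) ^ (-(k : ℝ)) := fun k => by
    rw [NNReal.rpow_neg, NNReal.rpow_natCast, inv_pow]
  refine ⟨(p : ℝ≥0) ^ (-(1 / ((p : ℝ) - 1))), ?_, ?_, ?_⟩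
  · rw [← NNReal.rpow_natCast, ← NNReal.rpow_mul, Nat.cast_sub hp.le, Nat.cast_one, neg_mul,
      one_div_mul_cancel hp1, NNReal.rpow_neg_one]
  · rw [hinv, ← NNReal.rpow_add hq, neg_add]
  · rw [← pow_one (p : ℝ≥0)⁻¹, hinv, ← NNReal.rpow_add hq]
    congr 1
    field_simp
    push_cast
    ring

theorem binomial_root_of_one_plus_bw_general (p : ℕ) (hp : p.Prime) (n : ℕ) (hn : 1 < n)
    (K : Type*) [Field K] [CharZero K]
    (v : Valuation K NNReal) (hvp : v (p : K) = (p : NNReal)⁻¹)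
    (hcomplete : ∀ a : ℕ → K,
      (∀ ε : NNReal, 0 < ε → ∃ M : ℕ, ∀ i ≥ M, ∀ j ≥ M, v (a i - a j) < ε) →
      ∃ x : K, ∀ ε : NNReal, 0 < ε → ∃ M : ℕ, ∀ i ≥ M, v (a i - x) < ε)
    (b : K) (hb : v b = (p : NNReal) ^ (-((n : ℝ) + 1 / ((p : ℝ) - 1))))
    (w : PowerSeries K) (hw1 : ∀ i : ℕ, v (coeff (R := K) i w) ≤ 1)
    (hw2 : ∀ ε : NNReal, 0 < ε → ∃ M : ℕ, ∀ i ≥ M, v (coeff (R := K) i w) < ε) :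
    ∃ u : PowerSeries K,
      (∀ i : ℕ, v (coeff (R := K) i u) ≤ 1) ∧
      (∀ ε : NNReal, 0 < ε → ∃ M : ℕ, ∀ i ≥ M, v (coeff (R := K) i u) < ε) ∧
      (∀ i : ℕ, v (coeff (R := K) i (u - w)) < 1) ∧
      v (b / (p : K) ^ (n - 1)) = (p : NNReal) ^ (-((p : ℝ) / ((p : ℝ) - 1))) ∧
      (1 + C (R := K) (b / (p : K) ^ (n - 1)) * u) ^ (p ^ (n - 1)) = 1 + C (R := K) b * w ∧
      (∀ ε : NNReal, 0 < ε → ∃ M : ℕ, ∀ N ≥ M, ∀ i : ℕ,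
        v (coeff (R := K) i
            ((∑ j ∈ Finset.range N, C (R := K) ((binomialRootCoeff p n j : ℚ) : K) * (C (R := K) b * w) ^ j) -
              (1 + C (R := K) (b / (p : K) ^ (n - 1)) * u))) < ε) := by
  obtain ⟨δ, hδ, hbδ, hδa⟩ := exists_pow_sub_one_eq_inv_natCast hp.one_lt n
  rw [← hvp] at hδ hbδ hδa
  rw [hbδ] at hb
  have hvp1 : v p < 1 := hvp ▸ inv_lt_one_of_one_lt₀ (by exact_mod_cast hp.one_lt)
  have hδ1 : δ ≤ 1 := (pow_le_one_iff (by have := hp.two_le; omega)).mp (hδ ▸ hvp1.le)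
  have hva : v (b / p ^ (n - 1)) = v p * δ :=
    v.map_div_pow_sub_one (by simp [hvp, hp.ne_zero]) hn.le hb
  have hva1 : v (b / p ^ (n - 1)) ≤ v p := hva ▸ mul_le_of_le_one_right' hδ1
  have hvb : v b ≤ v p :=
    hb ▸ mul_le_of_le_of_le_one (pow_le_of_le_one zero_le hvp1.le (by omega)) hδ1
  obtain ⟨E, hBE, hE0, hE1, hE⟩ :=
    exists_binomialRootSeries_eq_one_add_C_mul v hp hvp1 hn hδ hb
  obtain ⟨u, hu⟩ := IsCauchyComplete.exists_isTruncEvalLimit hcomplete hvp1 hE hw1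
  refine ⟨u, hu.valuation_coeff_le_one hE0, hu.coeffTendstoZero hE0 hvp1 hE hw2 hw1,
    fun i => (hu.valuation_coeff_sub_le hE0 hE1 i).trans_lt hvp1, hva.trans hδa, ?_, ?_⟩
  · rw [hu.one_add_C_mul_pow hE0 hvp1 hE hva1 (valuation_coeff_one_add_C_mul_X_le v hvb)
      (hBE ▸ binomialRootSeries_pow hp.ne_zero n b) hw1]
    simp
  · simpa only [sum_binomialRootCoeff_eq_aeval_trunc, hBE] using
      hu.tendsto_aeval_trunc hvp1 (hva1.trans hvp1.le)

/-- Let `R` be a complete discrete valuation ring of mixed characteristic `(0, p)` (encoded via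
its fraction field `K`, a complete discretely valued field with `v(p) = 1` additively, i.e.
`v p = 1/p` multiplicatively, whose ring of integers is `{x | v x ≤ 1}`), let `g = 1 + b·w`
with `v(b) = n + 1/(p-1)`, `n > 1`, and `w ∈ R{T}` (a power series with integral coefficients
tending to `0`).  Then the binomial series for the `p^(n-1)`-st root of `g` converges in
`R{T}` and equals `1 + a·u`, where `a = b/p^(n-1)`, `v(a) = p/(p-1)`, and `u ≡ w` modulo the
maximal ideal of `R`. -/
theorem binomial_root_of_one_plus_bw (p : ℕ) (hp : p.Prime) (n : ℕ) (hn : 1 < n)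
    (K : Type*) [Field K] [CharZero K]
    (v : Valuation K NNReal) (hvp : v (p : K) = (p : NNReal)⁻¹)
    (hcomplete : ∀ a : ℕ → K,
      (∀ ε : NNReal, 0 < ε → ∃ M : ℕ, ∀ i ≥ M, ∀ j ≥ M, v (a i - a j) < ε) →
      ∃ x : K, ∀ ε : NNReal, 0 < ε → ∃ M : ℕ, ∀ i ≥ M, v (a i - x) < ε)
    (hdisc : ∃ π : K, v π < 1 ∧ ∀ x : K, x ≠ 0 → ∃ m : ℤ, v x = v π ^ m)
    (b : K) (hb : v b = (p : NNReal) ^ (-((n : ℝ) + 1 / ((p : ℝ) - 1))))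
    (w : PowerSeries K) (hw1 : ∀ i : ℕ, v (coeff (R := K) i w) ≤ 1)
    (hw2 : ∀ ε : NNReal, 0 < ε → ∃ M : ℕ, ∀ i ≥ M, v (coeff (R := K) i w) < ε) :
    ∃ u : PowerSeries K,
      (∀ i : ℕ, v (coeff (R := K) i u) ≤ 1) ∧
      (∀ ε : NNReal, 0 < ε → ∃ M : ℕ, ∀ i ≥ M, v (coeff (R := K) i u) < ε) ∧
      (∀ i : ℕ, v (coeff (R := K) i (u - w)) < 1) ∧
      v (b / (p : K) ^ (n - 1)) = (p : NNReal) ^ (-((p : ℝ) / ((p : ℝ) - 1))) ∧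
      (1 + C (R := K) (b / (p : K) ^ (n - 1)) * u) ^ (p ^ (n - 1)) = 1 + C (R := K) b * w ∧
      (∀ ε : NNReal, 0 < ε → ∃ M : ℕ, ∀ N ≥ M, ∀ i : ℕ,
        v (coeff (R := K) i
            ((∑ j ∈ Finset.range N, C (R := K) ((binomialRootCoeff p n j : ℚ) : K) * (C (R := K) b * w) ^ j) -
              (1 + C (R := K) (b / (p : K) ^ (n - 1)) * u))) < ε) :=
  binomial_root_of_one_plus_bw_general p hp n hn K v hvp hcomplete b hb w hw1 hw2
end

section
/- Let G be a finite group with normal subgroup N of order prime to p, and let P be a cyclic p-Sylow subgroup of G. Then the image of N_G(P)/Z_G(P) in terms of cardinality is preserved under the quotient: m_G = m_{G/N}, where m_H = |N_H(Q)/Z_H(Q)| for Q a p-Sylow subgroup of H. -/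
/-!
Reduction modulo `N` maps `N_G(P)` onto `N_{G/N}(P̄)` by the Frattini argument applied inside the
normalizer of `PN`. Since `N` meets `P` trivially, an element of `N_G(P)` centralizes `P` as soon as
its image centralizes `P̄`: its commutators with `P` lie in `P ∩ N = 1`. Hence the induced map
`N_G(P) → N_{G/N}(P̄)/Z_{G/N}(P̄)` is onto with kernel `Z_G(P) ∩ N_G(P)`.
-/

open Subgroup

theorem IsPGroup.disjoint_of_not_dvd_card {p : ℕ} (hp : p.Prime) {G : Type*} [Group G]
    {P N : Subgroup G} (hP : IsPGroup p P) (hN : ¬ p ∣ Nat.card N) : Disjoint P N := by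
  refine disjoint_def.mpr fun {g} hgP hgN ↦ ?_
  obtain ⟨k, hk⟩ := hP ⟨g, hgP⟩
  have hdvd_pow : orderOf g ∣ p ^ k := orderOf_mk g _ ▸ orderOf_dvd_of_pow_eq_one hk
  have hdvd_card : orderOf g ∣ Nat.card N := orderOf_dvd_natCard N hgN
  have hcop : (p ^ k).Coprime (Nat.card N) := ((hp.coprime_iff_not_dvd).mpr hN).pow_left k
  exact orderOf_eq_one_iff.mp (Nat.eq_one_of_dvd_coprimes hcop hdvd_pow hdvd_card)

namespace Sylow

variable {p : ℕ} [Fact p.Prime] {G : Type*} [Group G] [Finite G]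

theorem normalizer_le_normalizer_sup (P : Sylow p G) {H : Subgroup G}
    (hPH : (P : Subgroup G) ≤ H) :
    normalizer (H : Set G) ≤ normalizer (P : Set G) ⊔ H := by
  set K := normalizer (H : Set G)
  have hPK : (P : Subgroup G) ≤ K := hPH.trans le_normalizer
  have hPHK : (P.subtype hPK : Subgroup K) ≤ H.subgroupOf K := by
    rw [coe_subtype]
    exact fun x hx ↦ hPH hx
  have hfrattini := normalizer_sup_eq_top' (N := H.subgroupOf K) (P.subtype hPK) hPHK
  rw [← (P.subtype hPK).coe_coe, coe_subtype, ← subgroupOf_normalizer_eq hPK, P.coe_coe]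
    at hfrattini
  calc K = (⊤ : Subgroup K).map K.subtype := by rw [← MonoidHom.range_eq_map, range_subtype]
    _ = ((normalizer (P : Set G)).subgroupOf K).map K.subtype ⊔
        (H.subgroupOf K).map K.subtype := by
      rw [← hfrattini, Subgroup.map_sup]
    _ ≤ normalizer (P : Set G) ⊔ H := by
      rw [subgroupOf_map_subtype, subgroupOf_map_subtype]
      exact sup_le_sup inf_le_left inf_le_left

theorem map_normalizer_eq_of_surjective {G' : Type*} [Group G'] {f : G →* G'}
    (hf : Function.Surjective f) (P : Sylow p G) :
    (normalizer (P : Set G)).map f = normalizer ((P : Subgroup G).map f : Set G') := by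
  refine le_antisymm (le_normalizer_map f) ?_
  calc normalizer ((P : Subgroup G).map f : Set G')
      = (normalizer (((P : Subgroup G).map f).comap f : Set G)).map f := by
        rw [← comap_normalizer_eq_of_surjective _ hf, map_comap_eq_self_of_surjective hf]
    _ ≤ (normalizer (P : Set G) ⊔ ((P : Subgroup G).map f).comap f).map f :=
        map_mono (P.normalizer_le_normalizer_sup (le_comap_map f P))
    _ = (normalizer (P : Set G)).map f ⊔ (P : Subgroup G).map f := by
        rw [Subgroup.map_sup, map_comap_eq_self_of_surjective hf]
    _ = (normalizer (P : Set G)).map f := sup_of_le_left (map_mono le_normalizer)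

end Sylow

namespace Subgroup

variable {G G' : Type*} [Group G] [Group G'] {P : Subgroup G} {f : G →* G'}

theorem map_mem_centralizer_map_iff (hPf : Disjoint P f.ker) {g : G}
    (hg : g ∈ normalizer (P : Set G)) :
    f g ∈ centralizer (P.map f : Set G') ↔ g ∈ centralizer (P : Set G) := by
  simp only [mem_centralizer_iff]
  refine ⟨fun h x hx ↦ ?_, fun h ↦ ?_⟩
  · have hcomm_P : g * x * g⁻¹ * x⁻¹ ∈ P :=
      P.mul_mem ((mem_normalizer_iff.mp hg x).mp hx) (P.inv_mem hx)
    have hcomm_ker : g * x * g⁻¹ * x⁻¹ ∈ f.ker := by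
      rw [MonoidHom.mem_ker, map_mul, map_mul, map_mul, map_inv, map_inv,
        ← h (f x) (mem_map_of_mem f hx)]
      group
    have hcomm : g * x * g⁻¹ * x⁻¹ = 1 := disjoint_def.mp hPf hcomm_P hcomm_ker
    rw [mul_inv_eq_one, mul_inv_eq_iff_eq_mul] at hcomm
    exact hcomm.symm
  · rintro _ ⟨x, hx, rfl⟩
    rw [← map_mul, ← map_mul, h x hx]

end Subgroup

theorem Sylow.relIndex_centralizer_normalizer_map {p : ℕ} [Fact p.Prime] {G G' : Type*} [Group G]
    [Finite G] [Group G'] {f : G →* G'} (hf : Function.Surjective f) (P : Sylow p G)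
    (hPf : Disjoint (P : Subgroup G) f.ker) :
    (centralizer (P : Set G)).relIndex (normalizer (P : Set G)) =
      (centralizer ((P : Subgroup G).map f : Set G')).relIndex
        (normalizer ((P : Subgroup G).map f : Set G')) := by
  have hinf : centralizer (P : Set G) ⊓ normalizer (P : Set G) =
      (centralizer ((P : Subgroup G).map f : Set G')).comap f ⊓ normalizer (P : Set G) := by
    ext g
    simp only [mem_inf, mem_comap]
    exact and_congr_left fun hn ↦ (map_mem_centralizer_map_iff hPf hn).symm
  rw [← inf_relIndex_right, hinf, inf_relIndex_right, relIndex_comap,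
    P.map_normalizer_eq_of_surjective hf]

theorem mG_eq_mGN_general (p : ℕ) (hp : p.Prime) (G : Type*) [Group G] [Finite G]
    (P : Sylow p G)
    (N : Subgroup G) [N.Normal] (hN : ¬ p ∣ Nat.card N) :
    (Subgroup.centralizer ((P : Subgroup G) : Set G)).relIndex (Subgroup.normalizer ((P : Subgroup G) : Set G)) =
      (Subgroup.centralizer ((Subgroup.map (QuotientGroup.mk' N) (P : Subgroup G)) :
          Set (G ⧸ N))).relIndex
        (Subgroup.normalizer ((Subgroup.map (QuotientGroup.mk' N) (P : Subgroup G)) :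
          Set (G ⧸ N))) := by
  have : Fact p.Prime := ⟨hp⟩
  have hPN : Disjoint (P : Subgroup G) (QuotientGroup.mk' N).ker := by
    rw [QuotientGroup.ker_mk']
    exact P.isPGroup'.disjoint_of_not_dvd_card hp hN
  exact P.relIndex_centralizer_normalizer_map (QuotientGroup.mk'_surjective N) hPN

/-- For a finite group `G` with cyclic `p`-Sylow subgroup `P` and a normal subgroup `N` of
order prime to `p`, one has `m_G = m_{G/N}`, where `m_H = |N_H(Q)/Z_H(Q)|` for a `p`-Sylow
subgroup `Q` of `H` and the `p`-Sylow subgroup of `G/N` is the image of `P`. -/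
theorem mG_eq_mGN (p : ℕ) (hp : p.Prime) (G : Type*) [Group G] [Finite G]
    (P : Sylow p G) (hcyc : IsCyclic ↥(P : Subgroup G))
    (N : Subgroup G) [N.Normal] (hN : ¬ p ∣ Nat.card N) :
    (Subgroup.centralizer ((P : Subgroup G) : Set G)).relIndex (Subgroup.normalizer ((P : Subgroup G) : Set G)) =
      (Subgroup.centralizer ((Subgroup.map (QuotientGroup.mk' N) (P : Subgroup G)) :
          Set (G ⧸ N))).relIndex
        (Subgroup.normalizer ((Subgroup.map (QuotientGroup.mk' N) (P : Subgroup G)) :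
          Set (G ⧸ N))) :=
  mG_eq_mGN_general p hp G P N hN
end
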